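/- arXiv:2505.17976 — 2 statements merged into one kernel-verified Lean document; each statement's English description precedes it below -/
import Mathlib

section
/- Let (X,d) be a metric space and let (μₙ)_{n∈ℕ} be a sequentially tight sequence of Borel probability measures on X. Then there exists a family (F^δ_ε)_{δ,ε>0} of finite subsets of X, increasing with decreasing δ and decreasing ε (i.e. F^δ_ε ⊆ F^{δ'}_{ε'} whenever δ' ≤ δ and ε' ≤ ε), such that (μₙ)_{n∈ℕ} is sequentially tight along the sets (F^δ_ε)_{δ,ε>0}, and moreover for every ε > 0 the set F_ε := closure(⋃_{δ>0} F^δ_ε) is a separable and complete subspace of X. -/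
open MeasureTheory Filter Topology Metric

private lemma isComplete_empty' {X : Type*} [UniformSpace X] : IsComplete (∅ : Set X) := by
  intro l hl hls
  exact absurd (le_bot_iff.1 (by simpa using hls)) hl.1.ne

private lemma isComplete_biUnion_finset {X : Type*} [UniformSpace X] {ι : Type*}
    {s : Finset ι} {f : ι → Set X} (h : ∀ i ∈ s, IsComplete (f i)) :
    IsComplete (⋃ i ∈ s, f i) := by
  classical
  induction s using Finset.induction with
  | empty => simpa using isComplete_empty'
  | @insert a t hnot ih =>
    rw [Finset.set_biUnion_insert]
    exact (h a (Finset.mem_insert_self a t)).union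
      (ih fun i hi => h i (Finset.mem_insert_of_mem hi))

private lemma isComplete_of_isClosed_subset {X : Type*} [UniformSpace X] {s t : Set X}
    (hs : IsClosed s) (ht : IsComplete t) (hst : s ⊆ t) : IsComplete s := by
  intro l hl hls
  obtain ⟨x, _, hlx⟩ := ht l hl (hls.trans (Filter.principal_mono.2 hst))
  refine ⟨x, ?_, hlx⟩
  have hne : l.NeBot := hl.1
  have hcp : ClusterPt x (Filter.principal s) := Filter.neBot_of_le (le_inf hlx hls)
  have := mem_closure_iff_clusterPt.2 hcp
  rwa [hs.closure_eq] at this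

/-- A sequentially tight sequence of Borel probability measures on a metric
space is sequentially tight along a family `(F^δ_ε)` of *finite* sets, increasing with
decreasing `δ` and `ε`, and for each `ε > 0` the set `F_ε = closure (⋃_δ F^δ_ε)` is a
separable and complete subspace. -/
theorem sequentially_tight_along_finite_sets
    {X : Type*} [MetricSpace X] [MeasurableSpace X] [BorelSpace X]
    (μ : ℕ → ProbabilityMeasure X)
    (htight : ∀ ε : ℝ, 0 < ε → ∃ K : ℝ → Set X,
      (∀ δ : ℝ, 0 < δ → IsCompact (K δ)) ∧
      (∀ δ : ℝ, 0 < δ →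
        ENNReal.ofReal (1 - ε) ≤
          Filter.liminf (fun n => (μ n : Measure X) (Metric.thickening δ (K δ))) Filter.atTop) ∧
      IsComplete (closure (⋃ δ ∈ Set.Ioi (0 : ℝ), K δ))) :
    ∃ F : ℝ → ℝ → Set X,
      (∀ δ ε : ℝ, 0 < δ → 0 < ε → (F δ ε).Finite) ∧
      (∀ δ δ' ε ε' : ℝ, 0 < δ' → δ' ≤ δ → 0 < ε' → ε' ≤ ε → F δ ε ⊆ F δ' ε') ∧
      (∀ ε : ℝ, 0 < ε → ∀ δ : ℝ, 0 < δ →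
        ENNReal.ofReal (1 - ε) ≤
          Filter.liminf (fun n => (μ n : Measure X) (Metric.thickening δ (F δ ε))) Filter.atTop) ∧
      (∀ ε : ℝ, 0 < ε →
        IsComplete (closure (⋃ δ ∈ Set.Ioi (0 : ℝ), F δ ε)) ∧
        TopologicalSpace.IsSeparable (closure (⋃ δ ∈ Set.Ioi (0 : ℝ), F δ ε))) := by
  classical
  have hpos : ∀ k : ℕ, (0:ℝ) < (1/2) ^ k := fun k => pow_pos (by norm_num) k
  have hex : ∀ r : ℝ, 0 < r → ∃ k : ℕ, (1/2:ℝ) ^ k ≤ r := fun r hr =>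
    (exists_pow_lt_of_lt_one hr (by norm_num)).imp fun k h => h.le
  set kf : ℝ → ℕ := fun r => if h : ∃ k : ℕ, (1/2:ℝ) ^ k ≤ r then Nat.find h else 0 with hkf
  have hkf_le : ∀ r : ℝ, 0 < r → (1/2:ℝ) ^ (kf r) ≤ r := by
    intro r hr
    have h := hex r hr
    simp only [hkf, dif_pos h]
    exact Nat.find_spec h
  have hkf_mono : ∀ r r' : ℝ, 0 < r' → r' ≤ r → kf r ≤ kf r' := by
    intro r r' hr' hle
    have h' := hex r' hr'
    have h := hex r (hr'.trans_le hle)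
    simp only [hkf, dif_pos h, dif_pos h']
    exact Nat.find_mono fun k hk => hk.trans hle
  choose K hKcomp hKlim hKcompl using fun m : ℕ => htight ((1/2) ^ m) (hpos m)
  have hcov : ∀ k m : ℕ, ∃ t : Set X, t ⊆ K m ((1/2) ^ (k+1)) ∧ t.Finite ∧
      K m ((1/2) ^ (k+1)) ⊆ ⋃ x ∈ t, ball x ((1/2) ^ (k+1)) :=
    fun k m => (hKcomp m _ (hpos (k+1))).finite_cover_balls (hpos (k+1))
  choose G hGsub hGfin hGcov using hcov
  refine ⟨fun δ ε => ⋃ k ∈ Finset.range (kf δ + 1), ⋃ m ∈ Finset.range (kf ε + 1), G k m,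
    ?_, ?_, ?_, ?_⟩
  · intro δ ε _ _
    exact (Finset.range _).finite_toSet.biUnion fun k _ =>
      (Finset.range _).finite_toSet.biUnion fun m _ => hGfin k m
  · intro δ δ' ε ε' hδ' hδle hε' hεle x hx
    simp only [Set.mem_iUnion, Finset.mem_range, Nat.lt_succ_iff] at hx ⊢
    obtain ⟨k, hk, m, hm, hxk⟩ := hx
    exact ⟨k, hk.trans (hkf_mono δ δ' hδ' hδle), m, hm.trans (hkf_mono ε ε' hε' hεle), hxk⟩
  · intro ε hε δ hδ
    set k := kf δ
    set m := kf ε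
    have h1 : ENNReal.ofReal (1 - ε) ≤ ENNReal.ofReal (1 - (1/2:ℝ) ^ m) :=
      ENNReal.ofReal_le_ofReal (by linarith [hkf_le ε hε])
    refine h1.trans ((hKlim m ((1/2) ^ (k+1)) (hpos (k+1))).trans ?_)
    have hsub : Metric.thickening ((1/2) ^ (k+1)) (K m ((1/2) ^ (k+1))) ⊆
        Metric.thickening δ (⋃ k' ∈ Finset.range (kf δ + 1),
          ⋃ m' ∈ Finset.range (kf ε + 1), G k' m') := by
      have h2 : K m ((1/2) ^ (k+1)) ⊆ Metric.thickening ((1/2) ^ (k+1)) (G k m) := by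
        rw [Metric.thickening_eq_biUnion_ball]; exact hGcov k m
      calc Metric.thickening ((1/2) ^ (k+1)) (K m ((1/2) ^ (k+1)))
          ⊆ Metric.thickening ((1/2) ^ (k+1))
            (Metric.thickening ((1/2) ^ (k+1)) (G k m)) :=
            Metric.thickening_subset_of_subset _ h2
        _ ⊆ Metric.thickening ((1/2) ^ (k+1) + (1/2) ^ (k+1)) (G k m) :=
            Metric.thickening_thickening_subset _ _ _
        _ ⊆ Metric.thickening δ (G k m) := by
            refine Metric.thickening_mono ?_ _
            have : (1/2:ℝ) ^ (k+1) + (1/2) ^ (k+1) = (1/2) ^ k := by ring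
            rw [this]; exact hkf_le δ hδ
        _ ⊆ Metric.thickening δ _ := by
            refine Metric.thickening_subset_of_subset _ ?_
            intro x hx
            simp only [Set.mem_iUnion, Finset.mem_range, Nat.lt_succ_iff]
            exact ⟨k, le_rfl, m, le_rfl, hx⟩
    exact Filter.liminf_le_liminf (Filter.Eventually.of_forall fun n => measure_mono hsub)
  · intro ε hε
    set M := kf ε
    set S : Set X := ⋃ δ ∈ Set.Ioi (0:ℝ), ⋃ k ∈ Finset.range (kf δ + 1),
      ⋃ m ∈ Finset.range (M + 1), G k m with hS
    set T : Set X := ⋃ m ∈ Finset.range (M + 1),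
      closure (⋃ δ ∈ Set.Ioi (0:ℝ), K m δ) with hT
    have hST : S ⊆ T := by
      intro x hx
      simp only [hS, Set.mem_iUnion, Finset.mem_range, Nat.lt_succ_iff] at hx
      obtain ⟨δ, hδ, k, _, m, hm, hxk⟩ := hx
      simp only [hT, Set.mem_iUnion, Finset.mem_range, Nat.lt_succ_iff]
      refine ⟨m, hm, subset_closure ?_⟩
      exact Set.mem_biUnion (Set.mem_Ioi.2 (hpos (k+1))) (hGsub k m hxk)
    have hTcomp : IsComplete T := isComplete_biUnion_finset fun m _ => hKcompl m
    have hTclosed : IsClosed T :=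
      (Finset.range (M+1)).finite_toSet.isClosed_biUnion fun m _ => isClosed_closure
    have hclS : closure S ⊆ T := hTclosed.closure_subset_iff.2 hST
    refine ⟨isComplete_of_isClosed_subset isClosed_closure hTcomp hclS, ?_⟩
    have hC : S ⊆ ⋃ m ∈ Finset.range (M + 1), ⋃ k : ℕ, G k m := by
      intro x hx
      simp only [hS, Set.mem_iUnion, Finset.mem_range, Nat.lt_succ_iff] at hx
      obtain ⟨δ, hδ, k, _, m, hm, hxk⟩ := hx
      simp only [Set.mem_iUnion, Finset.mem_range, Nat.lt_succ_iff]
      exact ⟨m, hm, k, hxk⟩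
    have hCc : (⋃ m ∈ Finset.range (M + 1), ⋃ k : ℕ, G k m).Countable :=
      Set.Countable.biUnion (Finset.range (M+1)).countable_toSet fun m _ =>
        Set.countable_iUnion fun k => (hGfin k m).countable
    exact (hCc.isSeparable.closure).mono (closure_mono hC)
end

section
/- Let (X,d) be a metric space and let (μₙ)_{n∈ℕ} be a sequence of Borel probability measures on X. Let ℒ := ⋂_{n∈ℕ} closure{μ_k : k ≥ n} ⊆ ℳ₁(X) be the set of all subsequential weak limits of (μₙ)_{n∈ℕ}. Then the following are equivalent: (i) (μₙ)_{n∈ℕ} is asymptotically tight; (ii) (μₙ)_{n∈ℕ} is sequentially tight; (iii) (μₙ)_{n∈ℕ} is precompact and ℒ is tight (i.e. for every ε > 0 there is a compact set K ⊆ X with μ(K) ≥ 1 − ε for every μ ∈ ℒ). -/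
/-!
(i) ⇒ (ii) is trivial (take the same compact set for every `δ`). For (ii) ⇒ (i), take compact sets
`Lₗ` from sequential tightness at the levels `ε 2⁻ˡ⁻²`, radii `δₗ → 0`, and the complete set `C` at
level `ε / 2`. Then `K = C ∩ ⋂ₗ cthickening δₗ Lₗ` is complete and totally bounded, hence compact,
and a compactness argument for sequences shows that every open `G ⊇ K` already contains some
`thickening η C ∩ ⋂_{l < j} thickening δₗ Lₗ`; the union bound applied to the complements gives
`limsup μₙ(Gᶜ) ≤ ε`.

The points of `ℒ` are exactly the cluster points of `(μₙ)`. By the portmanteau theorem, (i) makes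
`ℒ` tight, and (iii) ⇒ (i) follows by passing to a subsequence along which `μₙ(G)` stays small.
Precompactness under (i) is Prokhorov's argument without separability. The mass sits near the
separable union of the compact sets. Along a diagonal subsequence, `μₙ` converges on every finite
union of closed balls with rational radii centred in a countable dense subset. The limit measure is
the metric outer measure generated on open sets by the inner approximations by such unions, and
asymptotic tightness gives it total mass one.
-/

open MeasureTheory Filter Topology Metric Set
open scoped ENNReal

theorem ENNReal.limsup_add_le_nat (u v : ℕ → ℝ≥0∞) :
    limsup (fun n => u n + v n) atTop ≤ limsup u atTop + limsup v atTop := by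
  simp only [limsup_eq_iInf_iSup_of_nat]
  rw [ENNReal.iInf_add_iInf fun i j => ⟨max i j, add_le_add
    (biSup_mono fun n hn => (le_max_left i j).trans hn)
    (biSup_mono fun n hn => (le_max_right i j).trans hn)⟩]
  exact iInf_mono fun N => iSup₂_le fun n hn =>
    add_le_add (le_iSup₂ (f := fun i (_ : i ≥ N) => u i) n hn)
      (le_iSup₂ (f := fun i (_ : i ≥ N) => v i) n hn)

theorem ENNReal.limsup_finset_sum_le_nat {ι : Type*} (s : Finset ι) (u : ι → ℕ → ℝ≥0∞) :
    limsup (fun n => ∑ i ∈ s, u i n) atTop ≤ ∑ i ∈ s, limsup (u i) atTop := by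
  classical
  induction s using Finset.induction_on with
  | empty => simp
  | insert i s hi ih =>
    simp only [Finset.sum_insert hi]
    exact (limsup_add_le_nat _ _).trans (add_le_add le_rfl ih)

theorem ENNReal.one_le_of_forall_ofReal_one_sub_le {a : ℝ≥0∞}
    (h : ∀ ε : ℝ, 0 < ε → ENNReal.ofReal (1 - ε) ≤ a) : 1 ≤ a := by
  have hlim : Tendsto (fun ε : ℝ => ENNReal.ofReal (1 - ε)) (𝓝[>] 0) (𝓝 1) :=
    ((ENNReal.continuous_ofReal.comp (continuous_const.sub continuous_id)).tendsto' 0 1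
      (by simp)).mono_left nhdsWithin_le_nhds
  exact le_of_tendsto hlim (eventually_nhdsWithin_of_forall h)

theorem ENNReal.ofReal_half_add_sum_geometric_le {ε : ℝ} (hε : 0 ≤ ε) (j : ℕ) :
    ENNReal.ofReal (ε / 2) + ∑ l ∈ Finset.range j, ENNReal.ofReal (ε / 4 * (1 / 2) ^ l) ≤
      ENNReal.ofReal ε := by
  rw [← ENNReal.ofReal_sum_of_nonneg fun l _ => by positivity,
    ← ENNReal.ofReal_add (by positivity) (by positivity), ← Finset.mul_sum]
  exact ENNReal.ofReal_le_ofReal (by nlinarith [sum_geometric_two_le j])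

theorem exists_subseq_forall_tendsto {ι : Type*} [Countable ι] (f : ℕ → ι → ℝ≥0∞) :
    ∃ ψ : ℕ → ℕ, StrictMono ψ ∧ ∃ α : ι → ℝ≥0∞,
      ∀ i, Tendsto (fun n => f (ψ n) i) atTop (𝓝 (α i)) := by
  obtain ⟨α, -, ψ, hψ, h⟩ := isCompact_univ.tendsto_subseq (x := f) fun _ => mem_univ _
  exact ⟨ψ, hψ, α, tendsto_pi_nhds.1 h⟩

theorem mem_iInter_closure_tail_iff {Y : Type*} [TopologicalSpace Y] {y : ℕ → Y} {a : Y} :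
    a ∈ ⋂ n : ℕ, closure {b : Y | ∃ k : ℕ, n ≤ k ∧ b = y k} ↔ MapClusterPt a atTop y := by
  have htail (n : ℕ) : {b : Y | ∃ k : ℕ, n ≤ k ∧ b = y k} = y '' Ici n := by
    ext b
    simp [eq_comm]
  simp_rw [htail, mapClusterPt_atTop_iff_forall_mem_closure, mem_iInter]

theorem ofReal_one_sub_le_liminf_iff {X : Type*} [MeasurableSpace X]
    {ρ : ℕ → ProbabilityMeasure X} {G : Set X} (hG : MeasurableSet G) {ε : ℝ} (hε : 0 ≤ ε) :
    ENNReal.ofReal (1 - ε) ≤ liminf (fun n => (ρ n : Measure X) G) atTop ↔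
      limsup (fun n => (ρ n : Measure X) Gᶜ) atTop ≤ ENNReal.ofReal ε := by
  have hcompl : (fun n => (ρ n : Measure X) G) = fun n => 1 - (ρ n : Measure X) Gᶜ := by
    ext n
    rw [← prob_compl_eq_one_sub hG.compl, compl_compl]
  rw [hcompl, ENNReal.liminf_const_sub _ _ ENNReal.one_ne_top, ENNReal.ofReal_sub _ hε,
    ENNReal.ofReal_one, ENNReal.sub_le_sub_iff_left _ ENNReal.one_ne_top]
  exact limsup_le_of_le (by isBoundedDefault) (.of_forall fun n => prob_le_one)

theorem limsup_measure_compl_inter_biInter_le {X ι : Type*} [MeasurableSpace X]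
    (ρ : ℕ → Measure X) (A : Set X) (B : ι → Set X) (s : Finset ι) :
    limsup (fun n => ρ n (A ∩ ⋂ i ∈ s, B i)ᶜ) atTop ≤
      limsup (fun n => ρ n Aᶜ) atTop + ∑ i ∈ s, limsup (fun n => ρ n (B i)ᶜ) atTop := by
  refine (limsup_le_limsup (.of_forall fun n => ?_)).trans ((ENNReal.limsup_add_le_nat _ _).trans
    (add_le_add le_rfl (ENNReal.limsup_finset_sum_le_nat _ _)))
  change ρ n (A ∩ ⋂ i ∈ s, B i)ᶜ ≤ ρ n Aᶜ + ∑ i ∈ s, ρ n (B i)ᶜ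
  grw [compl_inter, compl_iInter₂, measure_union_le, measure_biUnion_finset_le]

theorem liminf_measure_le_of_mapClusterPt {X : Type*} [PseudoMetricSpace X] [MeasurableSpace X]
    [OpensMeasurableSpace X] {μ : ℕ → ProbabilityMeasure X}
    {ν : ProbabilityMeasure X} (hν : MapClusterPt ν atTop μ) {F : Set X} (hF : IsClosed F) :
    liminf (fun n => (μ n : Measure X) F) atTop ≤ (ν : Measure X) F := by
  have : (𝓝 ν ⊓ map μ atTop).NeBot := hν
  calc liminf (fun n => (μ n : Measure X) F) atTop
      = liminf (fun ρ : ProbabilityMeasure X => (ρ : Measure X) F) (map μ atTop) :=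
        (liminf_comp _ _ _).symm
    _ ≤ liminf (fun ρ : ProbabilityMeasure X => (ρ : Measure X) F) (𝓝 ν ⊓ map μ atTop) :=
        liminf_le_liminf_of_le inf_le_right
    _ ≤ limsup (fun ρ : ProbabilityMeasure X => (ρ : Measure X) F) (𝓝 ν ⊓ map μ atTop) :=
        liminf_le_limsup
    _ ≤ (ν : Measure X) F :=
        ProbabilityMeasure.limsup_measure_closed_le_of_tendsto (tendsto_id'.2 inf_le_left) hF

section CompactFromThickenings

variable {X : Type*} [MetricSpace X]

theorem totallyBounded_of_forall_subset_thickening {s : Set X}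
    (h : ∀ ρ > 0, ∃ t : Set X, TotallyBounded t ∧ s ⊆ thickening ρ t) : TotallyBounded s := by
  refine totallyBounded_iff.2 fun ρ hρ => ?_
  obtain ⟨t, ht, hst⟩ := h (ρ / 2) (half_pos hρ)
  obtain ⟨F, hF, htF⟩ := totallyBounded_iff.1 ht (ρ / 2) (half_pos hρ)
  refine ⟨F, hF, fun x hx => ?_⟩
  obtain ⟨y, hy, hxy⟩ := mem_thickening_iff.1 (hst hx)
  obtain ⟨z, hz, hyz⟩ := mem_iUnion₂.1 (htF hy)
  exact mem_iUnion₂.2 ⟨z, hz, mem_ball.2 <| calc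
    dist x z ≤ dist x y + dist y z := dist_triangle x y z
    _ < ρ / 2 + ρ / 2 := add_lt_add hxy hyz
    _ = ρ := add_halves ρ⟩

theorem IsComplete.of_isClosed_of_subset {s t : Set X} (hs : IsComplete s) (ht : IsClosed t)
    (hts : t ⊆ s) : IsComplete t := by
  intro f hf hft
  obtain ⟨x, -, hfx⟩ := hs f hf (hft.trans (principal_mono.2 hts))
  exact ⟨x, ht.closure_subset (mem_closure_iff_clusterPt.2 (hf.1.mono (le_inf hfx hft))), hfx⟩

variable {C : Set X} {L : ℕ → Set X} {δ : ℕ → ℝ}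

theorem isCompact_inter_iInter_cthickening (hC : IsComplete C) (hL : ∀ l, IsCompact (L l))
    (hδ : Tendsto δ atTop (𝓝 0)) : IsCompact (C ∩ ⋂ l, cthickening (δ l) (L l)) := by
  have hclosed : IsClosed (C ∩ ⋂ l, cthickening (δ l) (L l)) :=
    hC.isClosed.inter (isClosed_iInter fun l => isClosed_cthickening)
  refine isCompact_iff_totallyBounded_isComplete.2
    ⟨totallyBounded_of_forall_subset_thickening fun ρ hρ => ?_,
      hC.of_isClosed_of_subset hclosed inter_subset_left⟩
  obtain ⟨l, hl⟩ := (hδ.eventually (gt_mem_nhds hρ)).exists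
  exact ⟨L l, (hL l).totallyBounded, inter_subset_right.trans <|
    (iInter_subset _ l).trans (cthickening_subset_thickening' hρ hl _)⟩

theorem totallyBounded_range_of_mem_thickening (hL : ∀ l, IsCompact (L l))
    (hδ : Tendsto δ atTop (𝓝 0)) {x z : ℕ → X} (hxz : ∀ j : ℕ, dist (z j) (x j) < 1 / ((j : ℝ) + 1))
    (hxL : ∀ j, ∀ l < j, x j ∈ thickening (δ l) (L l)) : TotallyBounded (range z) := by
  refine totallyBounded_of_forall_subset_thickening fun ρ hρ => ?_
  obtain ⟨l, hl⟩ := (hδ.eventually (gt_mem_nhds (half_pos hρ))).exists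
  obtain ⟨J, hJ⟩ := exists_nat_one_div_lt (half_pos hρ)
  refine ⟨z '' Iio (max J l + 1) ∪ L l,
    ((finite_Iio _).image z).totallyBounded.union (hL l).totallyBounded, ?_⟩
  rintro _ ⟨j, rfl⟩
  rcases lt_or_ge j (max J l + 1) with hj | hj
  · exact self_subset_thickening hρ _ (Or.inl (mem_image_of_mem z hj))
  obtain ⟨y, hy, hxy⟩ := mem_thickening_iff.1 (hxL j l (by omega))
  have hjJ : (1 : ℝ) / (j + 1) ≤ 1 / (J + 1) :=
    one_div_le_one_div_of_le (by positivity) (by exact_mod_cast (by omega : J + 1 ≤ j + 1))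
  refine mem_thickening_iff.2 ⟨y, Or.inr hy, ?_⟩
  calc dist (z j) y ≤ dist (z j) (x j) + dist (x j) y := dist_triangle _ _ _
    _ < ρ / 2 + ρ / 2 := add_lt_add ((hxz j).trans_le (hjJ.trans hJ.le)) (hxy.trans hl)
    _ = ρ := add_halves ρ

theorem exists_mapClusterPt_mem_inter_iInter_cthickening (hC : IsComplete C)
    (hL : ∀ l, IsCompact (L l)) (hδ : Tendsto δ atTop (𝓝 0)) {x : ℕ → X}
    (hxC : ∀ j : ℕ, x j ∈ thickening (1 / ((j : ℝ) + 1)) C)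
    (hxL : ∀ j, ∀ l < j, x j ∈ thickening (δ l) (L l)) :
    ∃ a ∈ C ∩ ⋂ l, cthickening (δ l) (L l), MapClusterPt a atTop x := by
  choose z hzC hxz using fun j => mem_thickening_iff.1 (hxC j)
  have hzx : ∀ j : ℕ, dist (z j) (x j) < 1 / ((j : ℝ) + 1) := fun j => dist_comm (x j) (z j) ▸ hxz j
  have hzC' : closure (range z) ⊆ C := hC.isClosed.closure_subset_iff.2 (range_subset_iff.2 hzC)
  have hzK : IsCompact (closure (range z)) := isCompact_iff_totallyBounded_isComplete.2
    ⟨(totallyBounded_range_of_mem_thickening hL hδ hzx hxL).closure,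
      hC.of_isClosed_of_subset isClosed_closure hzC'⟩
  obtain ⟨a, ha, φ, hφ, hzφ⟩ := hzK.tendsto_subseq fun j => subset_closure (mem_range_self j)
  have hdist : Tendsto (fun j => dist (z (φ j)) (x (φ j))) atTop (𝓝 0) :=
    squeeze_zero (fun _ => dist_nonneg) (fun j => (hzx (φ j)).le)
      (tendsto_one_div_add_atTop_nhds_zero_nat.comp hφ.tendsto_atTop)
  have hxφ : Tendsto (x ∘ φ) atTop (𝓝 a) := hzφ.congr_dist hdist
  refine ⟨a, ⟨hzC' ha, mem_iInter.2 fun l => ?_⟩, hxφ.mapClusterPt.of_comp hφ.tendsto_atTop⟩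
  refine isClosed_cthickening.mem_of_tendsto hxφ ?_
  filter_upwards [eventually_gt_atTop l] with j hj
  exact thickening_subset_cthickening _ _ (hxL (φ j) l (hj.trans_le hφ.le_apply))

theorem exists_thickening_inter_biInter_thickening_subset (hC : IsComplete C)
    (hL : ∀ l, IsCompact (L l)) (hδ : Tendsto δ atTop (𝓝 0)) {G : Set X} (hG : IsOpen G)
    (hKG : C ∩ ⋂ l, cthickening (δ l) (L l) ⊆ G) :
    ∃ j : ℕ, ∃ η > 0, thickening η C ∩ ⋂ l ∈ Finset.range j, thickening (δ l) (L l) ⊆ G := by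
  by_contra! h
  choose x hx hxG using fun j : ℕ => not_subset.1 (h j (1 / ((j : ℝ) + 1)) Nat.one_div_pos_of_nat)
  obtain ⟨a, haK, ha⟩ := exists_mapClusterPt_mem_inter_iInter_cthickening hC hL hδ
    (fun j => (hx j).1) fun j l hl => mem_iInter₂.1 (hx j).2 l (Finset.mem_range.2 hl)
  exact hG.isClosed_compl.mem_of_mapClusterPt ha (.of_forall hxG) (hKG haK)

end CompactFromThickenings

theorem Metric.AreSeparated.exists_isOpen_disjoint {X : Type*} [PseudoEMetricSpace X]
    {s t : Set X} (h : AreSeparated s t) :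
    ∃ U V : Set X, IsOpen U ∧ IsOpen V ∧ s ⊆ U ∧ t ⊆ V ∧ Disjoint U V := by
  obtain ⟨r, hr0, hr⟩ := h
  have hnhd (u : Set X) : IsOpen {x | infEDist x u < r / 2} ∧ u ⊆ {x | infEDist x u < r / 2} :=
    ⟨isOpen_lt continuous_infEDist continuous_const,
      fun x hx => by simpa [infEDist_zero_of_mem hx] using ENNReal.half_pos hr0⟩
  refine ⟨_, _, (hnhd s).1, (hnhd t).1, (hnhd s).2, (hnhd t).2, disjoint_left.2 fun x hxs hxt => ?_⟩
  obtain ⟨a, ha, hxa⟩ := infEDist_lt_iff.1 hxs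
  obtain ⟨b, hb, hxb⟩ := infEDist_lt_iff.1 hxt
  refine (hr a ha b hb).not_gt ?_
  calc edist a b ≤ edist a x + edist x b := edist_triangle a x b
    _ < r / 2 + r / 2 := ENNReal.add_lt_add (by rwa [edist_comm]) hxb
    _ = r := ENNReal.add_halves r

section OpenOuterMeasure

variable {X : Type*} [TopologicalSpace X] {β : Set X → ℝ≥0∞} {hβ : β ∅ = 0}

noncomputable def openOuterMeasure (β : Set X → ℝ≥0∞) (hβ : β ∅ = 0) : OuterMeasure X :=
  inducedOuterMeasure (fun s (_ : IsOpen s) => β s) isOpen_empty hβ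

theorem openOuterMeasure_le_extend (s : Set X) :
    openOuterMeasure β hβ s ≤ extend (fun s (_ : IsOpen s) => β s) s :=
  OuterMeasure.ofFunction_le (m_empty := extend_empty isOpen_empty hβ) s

theorem openOuterMeasure_le {U : Set X} (hU : IsOpen U) : openOuterMeasure β hβ U ≤ β U :=
  (openOuterMeasure_le_extend U).trans_eq (extend_eq _ hU)

theorem le_openOuterMeasure {s : Set X} {c : ℝ≥0∞}
    (h : ∀ U : ℕ → Set X, (∀ i, IsOpen (U i)) → s ⊆ ⋃ i, U i → c ≤ ∑' i, β (U i)) :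
    c ≤ openOuterMeasure β hβ s := by
  rw [openOuterMeasure, inducedOuterMeasure, OuterMeasure.ofFunction_apply]
  refine le_iInf₂ fun U hsU => ?_
  by_cases hU : ∀ i, IsOpen (U i)
  · simpa only [extend_eq _ (hU _)] using h U hU hsU
  · obtain ⟨i, hi⟩ := not_forall.1 hU
    exact le_top.trans_eq ((ENNReal.tsum_eq_top_of_eq_top ⟨i, extend_eq_top _ hi⟩).symm)

end OpenOuterMeasure

theorem isMetric_openOuterMeasure {X : Type*} [EMetricSpace X] {β : Set X → ℝ≥0∞}
    {hβ : β ∅ = 0} (hsuper : ∀ U V W : Set X, IsOpen U → IsOpen V → IsOpen W → Disjoint V W →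
      β (U ∩ V) + β (U ∩ W) ≤ β U) :
    (openOuterMeasure β hβ).IsMetric := by
  intro E F hEF
  refine le_antisymm (measure_union_le E F) ?_
  obtain ⟨V, W, hV, hW, hEV, hFW, hVW⟩ := hEF.exists_isOpen_disjoint
  set m := extend fun s (_ : IsOpen s) => β s
  have hsplit (s : Set X) : m (s ∩ V) + m (s ∩ W) ≤ m s := by
    by_cases hs : IsOpen s
    · simp only [m, extend_eq _ hs, extend_eq _ (hs.inter hV), extend_eq _ (hs.inter hW)]
      exact hsuper s V W hs hV hW hVW
    · simp [m, extend_eq_top _ hs]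
  conv_rhs => rw [openOuterMeasure, inducedOuterMeasure, OuterMeasure.ofFunction_apply]
  refine le_iInf₂ fun t ht => ?_
  have hpart {Z V : Set X} (hZt : Z ⊆ ⋃ i, t i) (hZV : Z ⊆ V) :
      openOuterMeasure β hβ Z ≤ ∑' i, m (t i ∩ V) := calc
    openOuterMeasure β hβ Z ≤ openOuterMeasure β hβ (⋃ i, t i ∩ V) :=
      measure_mono (iUnion_inter V t ▸ subset_inter hZt hZV)
    _ ≤ ∑' i, openOuterMeasure β hβ (t i ∩ V) := measure_iUnion_le _
    _ ≤ ∑' i, m (t i ∩ V) := ENNReal.tsum_le_tsum fun i => openOuterMeasure_le_extend _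
  calc openOuterMeasure β hβ E + openOuterMeasure β hβ F
      ≤ ∑' i, m (t i ∩ V) + ∑' i, m (t i ∩ W) :=
        add_le_add (hpart (subset_union_left.trans ht) hEV)
          (hpart (subset_union_right.trans ht) hFW)
    _ = ∑' i, (m (t i ∩ V) + m (t i ∩ W)) := ENNReal.tsum_add.symm
    _ ≤ ∑' i, m (t i) := ENNReal.tsum_le_tsum fun i => hsplit (t i)

section RationalBalls

variable {X : Type*} [MetricSpace X] {ι : Type*} (c : ι → X)

def ratBallUnion (J : Finset (ι × ℚ)) : Set X := ⋃ p ∈ J, closedBall (c p.1) p.2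

theorem exists_ratBallUnion_cover {K : Set X} (hK : IsCompact K) (hKc : K ⊆ closure (range c))
    {U : ℕ → Set X} (hU : ∀ i, IsOpen (U i)) (hKU : K ⊆ ⋃ i, U i) :
    ∃ (t : Finset ℕ) (J : ℕ → Finset (ι × ℚ)) (W : Set X), IsOpen W ∧ K ⊆ W ∧
      W ⊆ ⋃ i ∈ t, ratBallUnion c (J i) ∧ ∀ i, ratBallUnion c (J i) ⊆ U i := by
  classical
  have hball (x : K) : ∃ i, ∃ k, ∃ q : ℚ, (x : X) ∈ ball (c k) q ∧ closedBall (c k) q ⊆ U i := by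
    obtain ⟨i, hi⟩ := mem_iUnion.1 (hKU x.2)
    obtain ⟨r, hr, hrU⟩ := Metric.isOpen_iff.1 (hU i) x hi
    obtain ⟨q, hq0, hqr⟩ := exists_rat_btwn (half_pos hr)
    obtain ⟨_, ⟨k, rfl⟩, hk⟩ := Metric.mem_closure_iff.1 (hKc x.2) q (by exact_mod_cast hq0)
    refine ⟨i, k, q, mem_ball.2 hk, fun y hy => hrU (mem_ball.2 ?_)⟩
    calc dist y x ≤ dist y (c k) + dist (x : X) (c k) := dist_triangle_right _ _ _
      _ < q + q := add_lt_add_of_le_of_lt (mem_closedBall.1 hy) hk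
      _ < r := by linarith
  choose i k q hxball hqU using hball
  obtain ⟨t, ht⟩ := hK.elim_finite_subcover (fun x : K => ball (c (k x)) (q x))
    (fun _ => isOpen_ball) fun x hx => mem_iUnion.2 ⟨⟨x, hx⟩, hxball ⟨x, hx⟩⟩
  refine ⟨t.image i, fun j => (t.filter (fun x => i x = j)).image (fun x => (k x, q x)),
    ⋃ x ∈ t, ball (c (k x)) (q x), isOpen_biUnion fun _ _ => isOpen_ball, ht, ?_, ?_⟩
  · refine iUnion₂_subset fun x hx y hy => mem_iUnion₂.2 ⟨i x, Finset.mem_image_of_mem _ hx,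
      mem_iUnion₂.2 ⟨(k x, q x), ?_, ball_subset_closedBall hy⟩⟩
    exact Finset.mem_image.2 ⟨x, Finset.mem_filter.2 ⟨hx, rfl⟩, rfl⟩
  · intro j y hy
    simp only [ratBallUnion, mem_iUnion, Finset.mem_image, Finset.mem_filter] at hy
    obtain ⟨_, ⟨x, ⟨-, rfl⟩, rfl⟩, hy⟩ := hy
    exact hqU x hy

noncomputable def ratBallInnerMass (α : Finset (ι × ℚ) → ℝ≥0∞) (U : Set X) : ℝ≥0∞ :=
  ⨆ (J) (_ : ratBallUnion c J ⊆ U), α J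

variable [MeasurableSpace X] {c} {ρ : ℕ → ProbabilityMeasure X} {α : Finset (ι × ℚ) → ℝ≥0∞}
  (hα : ∀ J, Tendsto (fun n => (ρ n : Measure X) (ratBallUnion c J)) atTop (𝓝 (α J)))
include hα

theorem ratBallInnerMass_le_liminf (U : Set X) :
    ratBallInnerMass c α U ≤ liminf (fun n => (ρ n : Measure X) U) atTop :=
  iSup₂_le fun J hJ => (hα J).liminf_eq ▸ liminf_le_liminf (.of_forall fun n => measure_mono hJ)

theorem ratBallInnerMass_inter_add_inter_le [OpensMeasurableSpace X] {U V W : Set X}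
    (hVW : Disjoint V W) :
    ratBallInnerMass c α (U ∩ V) + ratBallInnerMass c α (U ∩ W) ≤ ratBallInnerMass c α U := by
  classical
  have hempty (s : Set X) : ∃ J, ratBallUnion c J ⊆ s := ⟨∅, by simp [ratBallUnion]⟩
  refine ENNReal.biSup_add_biSup_le' (hempty _) (hempty _) fun J₁ h₁ J₂ h₂ => ?_
  have hunion : ratBallUnion c (J₁ ∪ J₂) = ratBallUnion c J₁ ∪ ratBallUnion c J₂ :=
    Finset.set_biUnion_union _ _ _
  have hadd : α (J₁ ∪ J₂) = α J₁ + α J₂ := by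
    refine tendsto_nhds_unique (hα _) ?_
    simp_rw [hunion]
    refine ((hα J₁).add (hα J₂)).congr fun n => (measure_union ?_ ?_).symm
    · exact hVW.mono (h₁.trans inter_subset_right) (h₂.trans inter_subset_right)
    · exact (J₂.finite_toSet.isClosed_biUnion fun _ _ => isClosed_closedBall).measurableSet
  rw [← hadd]
  refine le_iSup₂ (f := fun J (_ : ratBallUnion c J ⊆ U) => α J) _ ?_
  rw [hunion]
  exact union_subset (h₁.trans inter_subset_left) (h₂.trans inter_subset_left)

theorem ofReal_le_tsum_ratBallInnerMass {K : Set X} (hK : IsCompact K)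
    (hKc : K ⊆ closure (range c)) {ε : ℝ}
    (hmass : ∀ G : Set X, IsOpen G → K ⊆ G →
      ENNReal.ofReal (1 - ε) ≤ liminf (fun n => (ρ n : Measure X) G) atTop)
    {U : ℕ → Set X} (hU : ∀ i, IsOpen (U i)) (hKU : K ⊆ ⋃ i, U i) :
    ENNReal.ofReal (1 - ε) ≤ ∑' i, ratBallInnerMass c α (U i) := by
  obtain ⟨t, J, W, hW, hKW, hWJ, hJU⟩ := exists_ratBallUnion_cover c hK hKc hU hKU
  calc ENNReal.ofReal (1 - ε)
      ≤ liminf (fun n => (ρ n : Measure X) W) atTop := hmass W hW hKW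
    _ ≤ liminf (fun n => ∑ i ∈ t, (ρ n : Measure X) (ratBallUnion c (J i))) atTop :=
        liminf_le_liminf (.of_forall fun n =>
          (measure_mono hWJ).trans (measure_biUnion_finset_le _ _))
    _ = ∑ i ∈ t, α (J i) := (tendsto_finsetSum _ fun i _ => hα (J i)).liminf_eq
    _ ≤ ∑ i ∈ t, ratBallInnerMass c α (U i) := Finset.sum_le_sum fun i _ =>
        le_iSup₂ (f := fun J (_ : ratBallUnion c J ⊆ U i) => α J) (J i) (hJU i)
    _ ≤ ∑' i, ratBallInnerMass c α (U i) := ENNReal.sum_le_tsum t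

theorem exists_tendsto_of_tendsto_ratBallUnion [BorelSpace X]
    (htight : ∀ ε : ℝ, 0 < ε → ∃ K : Set X, IsCompact K ∧ K ⊆ closure (range c) ∧
      ∀ G : Set X, IsOpen G → K ⊆ G →
        ENNReal.ofReal (1 - ε) ≤ liminf (fun n => (ρ n : Measure X) G) atTop) :
    ∃ ν : ProbabilityMeasure X, Tendsto ρ atTop (𝓝 ν) := by
  have hβ0 : ratBallInnerMass c α ∅ = 0 :=
    le_antisymm ((ratBallInnerMass_le_liminf hα ∅).trans (by simp)) bot_le
  have hγ : (openOuterMeasure (ratBallInnerMass c α) hβ0).IsMetric :=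
    isMetric_openOuterMeasure fun _ _ _ _ _ _ hVW => ratBallInnerMass_inter_add_inter_le hα hVW
  set ν := (openOuterMeasure (ratBallInnerMass c α) hβ0).toMeasure hγ.le_caratheodory
  have hopen (G : Set X) (hG : IsOpen G) : ν G ≤ liminf (fun n => (ρ n : Measure X) G) atTop := by
    rw [toMeasure_apply _ _ hG.measurableSet]
    exact (openOuterMeasure_le hG).trans (ratBallInnerMass_le_liminf hα G)
  have huniv : ν univ = 1 := by
    refine le_antisymm ((hopen univ isOpen_univ).trans (by simp)) ?_
    rw [toMeasure_apply _ _ MeasurableSet.univ]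
    refine ENNReal.one_le_of_forall_ofReal_one_sub_le fun ε hε => ?_
    obtain ⟨K, hK, hKc, hmass⟩ := htight ε hε
    exact le_openOuterMeasure fun U hU hcov =>
      ofReal_le_tsum_ratBallInnerMass hα hK hKc hmass hU ((subset_univ K).trans hcov)
  exact ⟨⟨ν, ⟨huniv⟩⟩, tendsto_of_forall_isOpen_le_liminf_nat' hopen⟩

end RationalBalls

section Tightness

variable {X : Type*} [MetricSpace X] [MeasurableSpace X]

def AsymptoticallyTight (μ : ℕ → ProbabilityMeasure X) : Prop :=
  ∀ ε : ℝ, 0 < ε → ∃ K : Set X, IsCompact K ∧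
    ∀ G : Set X, IsOpen G → K ⊆ G →
      ENNReal.ofReal (1 - ε) ≤ liminf (fun n => (μ n : Measure X) G) atTop

def SequentiallyTight (μ : ℕ → ProbabilityMeasure X) : Prop :=
  ∀ ε : ℝ, 0 < ε → ∃ K : ℝ → Set X,
    (∀ δ : ℝ, 0 < δ → IsCompact (K δ)) ∧
    (∀ δ : ℝ, 0 < δ →
      ENNReal.ofReal (1 - ε) ≤ liminf (fun n => (μ n : Measure X) (thickening δ (K δ))) atTop) ∧
    IsComplete (closure (⋃ δ ∈ Ioi (0 : ℝ), K δ))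

theorem AsymptoticallyTight.comp_strictMono {μ : ℕ → ProbabilityMeasure X}
    (hμ : AsymptoticallyTight μ) {φ : ℕ → ℕ} (hφ : StrictMono φ) :
    AsymptoticallyTight (μ ∘ φ) := fun ε hε =>
  let ⟨K, hK, hmass⟩ := hμ ε hε
  ⟨K, hK, fun G hG hKG => (hmass G hG hKG).trans (hφ.tendsto_atTop.liminf_le_liminf_comp)⟩

theorem AsymptoticallyTight.sequentiallyTight {μ : ℕ → ProbabilityMeasure X}
    (hμ : AsymptoticallyTight μ) : SequentiallyTight μ := by
  intro ε hε
  obtain ⟨K, hK, hmass⟩ := hμ ε hε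
  refine ⟨fun _ => K, fun _ _ => hK,
    fun δ hδ => hmass _ isOpen_thickening (self_subset_thickening hδ K), ?_⟩
  rw [biUnion_const nonempty_Ioi, hK.isClosed.closure_eq]
  exact hK.isComplete

variable [OpensMeasurableSpace X]

theorem SequentiallyTight.asymptoticallyTight {μ : ℕ → ProbabilityMeasure X}
    (hμ : SequentiallyTight μ) : AsymptoticallyTight μ := by
  intro ε hε
  obtain ⟨κ, -, hκ, hC⟩ := hμ (ε / 2) (half_pos hε)
  choose F hF hFmass _ using fun l : ℕ => hμ (ε / 4 * (1 / 2) ^ l) (by positivity)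
  set C := closure (⋃ δ ∈ Ioi (0 : ℝ), κ δ)
  set δ : ℕ → ℝ := fun l => 1 / ((l : ℝ) + 1)
  have hδ0 (l : ℕ) : 0 < δ l := Nat.one_div_pos_of_nat
  have hL (l : ℕ) : IsCompact (F l (δ l)) := hF l _ (hδ0 l)
  have hδ : Tendsto δ atTop (𝓝 0) := tendsto_one_div_add_atTop_nhds_zero_nat
  refine ⟨_, isCompact_inter_iInter_cthickening hC hL hδ, fun G hG hKG => ?_⟩
  obtain ⟨j, η, hη, hsub⟩ := exists_thickening_inter_biInter_thickening_subset hC hL hδ hG hKG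
  have hCdef : limsup (fun n => (μ n : Measure X) (thickening η C)ᶜ) atTop ≤
      ENNReal.ofReal (ε / 2) := by
    rw [← ofReal_one_sub_le_liminf_iff isOpen_thickening.measurableSet (half_pos hε).le]
    refine (hκ η hη).trans (liminf_le_liminf (.of_forall fun n => measure_mono ?_))
    exact thickening_subset_of_subset η ((subset_biUnion_of_mem (u := κ) hη).trans subset_closure)
  have hLdef (l : ℕ) : limsup (fun n => (μ n : Measure X) (thickening (δ l) (F l (δ l)))ᶜ) atTop ≤
      ENNReal.ofReal (ε / 4 * (1 / 2) ^ l) :=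
    (ofReal_one_sub_le_liminf_iff isOpen_thickening.measurableSet (by positivity)).1
      (hFmass l _ (hδ0 l))
  rw [ofReal_one_sub_le_liminf_iff hG.measurableSet hε.le]
  calc limsup (fun n => (μ n : Measure X) Gᶜ) atTop
      ≤ limsup (fun n => (μ n : Measure X)
          (thickening η C ∩ ⋂ l ∈ Finset.range j, thickening (δ l) (F l (δ l)))ᶜ) atTop :=
        limsup_le_limsup (.of_forall fun n => measure_mono (compl_subset_compl.2 hsub))
    _ ≤ ENNReal.ofReal (ε / 2) + ∑ l ∈ Finset.range j, ENNReal.ofReal (ε / 4 * (1 / 2) ^ l) :=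
        (limsup_measure_compl_inter_biInter_le _ _ _ _).trans
          (add_le_add hCdef (Finset.sum_le_sum fun l _ => hLdef l))
    _ ≤ ENNReal.ofReal ε := ENNReal.ofReal_half_add_sum_geometric_le hε.le j

theorem AsymptoticallyTight.le_measure_of_mapClusterPt {μ : ℕ → ProbabilityMeasure X}
    (hμ : AsymptoticallyTight μ) {ε : ℝ} (hε : 0 < ε) :
    ∃ K : Set X, IsCompact K ∧ ∀ ν : ProbabilityMeasure X, MapClusterPt ν atTop μ →
      ENNReal.ofReal (1 - ε) ≤ (ν : Measure X) K := by
  obtain ⟨K, hK, hmass⟩ := hμ ε hε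
  refine ⟨K, hK, fun ν hν => ?_⟩
  have hcthick : ∀ δ > 0, ENNReal.ofReal (1 - ε) ≤ (ν : Measure X) (cthickening δ K) :=
    fun δ hδ => calc
      ENNReal.ofReal (1 - ε) ≤ liminf (fun n => (μ n : Measure X) (thickening δ K)) atTop :=
        hmass _ isOpen_thickening (self_subset_thickening hδ K)
      _ ≤ liminf (fun n => (μ n : Measure X) (cthickening δ K)) atTop :=
        liminf_le_liminf (.of_forall fun n => measure_mono (thickening_subset_cthickening δ K))
      _ ≤ (ν : Measure X) (cthickening δ K) :=
        liminf_measure_le_of_mapClusterPt hν isClosed_cthickening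
  have hlim := tendsto_measure_cthickening_of_isClosed (μ := (ν : Measure X))
    ⟨1, one_pos, measure_ne_top _ _⟩ hK.isClosed
  exact ge_of_tendsto (hlim.mono_left (nhdsWithin_le_nhds (s := Ioi 0)))
    (eventually_nhdsWithin_of_forall hcthick)

theorem le_liminf_measure_of_forall_mapClusterPt {μ : ℕ → ProbabilityMeasure X}
    (hμ : ∀ φ : ℕ → ℕ, StrictMono φ → ∃ ψ : ℕ → ℕ, StrictMono ψ ∧ ∃ ν : ProbabilityMeasure X,
      Tendsto (fun j => μ (φ (ψ j))) atTop (𝓝 ν))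
    {G : Set X} (hG : IsOpen G) {c : ℝ≥0∞}
    (hc : ∀ ν : ProbabilityMeasure X, MapClusterPt ν atTop μ → c ≤ (ν : Measure X) G) :
    c ≤ liminf (fun n => (μ n : Measure X) G) atTop := by
  by_contra! hlt
  obtain ⟨c', hlt', hc'⟩ := exists_between hlt
  obtain ⟨φ, hφ, hφG⟩ :=
    extraction_of_frequently_atTop (frequently_lt_of_liminf_lt (by isBoundedDefault) hlt')
  obtain ⟨ψ, hψ, ν, hν⟩ := hμ φ hφ
  have hνG : (ν : Measure X) G ≤ c' := calc
    (ν : Measure X) G ≤ liminf (fun j => (μ (φ (ψ j)) : Measure X) G) atTop :=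
      ProbabilityMeasure.le_liminf_measure_open_of_tendsto hν hG
    _ ≤ c' := liminf_le_of_frequently_le' (.of_forall fun j => (hφG (ψ j)).le)
  exact (hc ν (hν.mapClusterPt.of_comp (hφ.comp hψ).tendsto_atTop)).not_gt (hνG.trans_lt hc')

theorem asymptoticallyTight_of_forall_subseq {μ : ℕ → ProbabilityMeasure X}
    (hμ : ∀ φ : ℕ → ℕ, StrictMono φ → ∃ ψ : ℕ → ℕ, StrictMono ψ ∧ ∃ ν : ProbabilityMeasure X,
      Tendsto (fun j => μ (φ (ψ j))) atTop (𝓝 ν))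
    (htight : ∀ ε : ℝ, 0 < ε → ∃ K : Set X, IsCompact K ∧
      ∀ ν : ProbabilityMeasure X, MapClusterPt ν atTop μ →
        ENNReal.ofReal (1 - ε) ≤ (ν : Measure X) K) :
    AsymptoticallyTight μ := fun ε hε =>
  let ⟨K, hK, hνK⟩ := htight ε hε
  ⟨K, hK, fun _ hG hKG => le_liminf_measure_of_forall_mapClusterPt hμ hG
    fun ν hν => (hνK ν hν).trans (measure_mono hKG)⟩


theorem AsymptoticallyTight.exists_subseq_tendsto [BorelSpace X] {μ : ℕ → ProbabilityMeasure X}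
    (hμ : AsymptoticallyTight μ) :
    ∃ ψ : ℕ → ℕ, StrictMono ψ ∧ ∃ ν : ProbabilityMeasure X, Tendsto (μ ∘ ψ) atTop (𝓝 ν) := by
  choose K hK hmass using fun m : ℕ => hμ (1 / ((m : ℝ) + 1)) Nat.one_div_pos_of_nat
  obtain ⟨D, hD, hKD⟩ := TopologicalSpace.IsSeparable.iUnion fun m => (hK m).isSeparable
  have := hD.to_subtype
  obtain ⟨ψ, hψ, α, hα⟩ := exists_subseq_forall_tendsto
    fun n (J : Finset (D × ℚ)) => (μ n : Measure X) (ratBallUnion Subtype.val J)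
  refine ⟨ψ, hψ, exists_tendsto_of_tendsto_ratBallUnion hα fun ε hε => ?_⟩
  obtain ⟨m, hm⟩ := exists_nat_one_div_lt hε
  refine ⟨K m, hK m, (subset_iUnion K m).trans (Subtype.range_val ▸ hKD), fun G hG hKG => ?_⟩
  calc ENNReal.ofReal (1 - ε) ≤ ENNReal.ofReal (1 - 1 / ((m : ℝ) + 1)) :=
        ENNReal.ofReal_le_ofReal (by linarith)
    _ ≤ liminf (fun n => (μ n : Measure X) G) atTop := hmass m G hG hKG
    _ ≤ liminf (fun n => ((μ ∘ ψ) n : Measure X) G) atTop :=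
        hψ.tendsto_atTop.liminf_le_liminf_comp

end Tightness

/-- For a sequence `(μₙ)` of Borel probability measures on a metric space, with
`ℒ = ⋂ₙ closure {μ_k : k ≥ n}` the set of subsequential weak limits, the following are
equivalent: (i) `(μₙ)` is asymptotically tight; (ii) `(μₙ)` is sequentially tight;
(iii) `(μₙ)` is precompact and `ℒ` is tight. -/
theorem asymptotically_tight_iff_sequentially_tight_iff_precompact_tight_limits
    {X : Type*} [MetricSpace X] [MeasurableSpace X] [BorelSpace X]
    (μ : ℕ → ProbabilityMeasure X)
    (L : Set (ProbabilityMeasure X))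
    (hL : L = ⋂ n : ℕ, closure {ν : ProbabilityMeasure X | ∃ k : ℕ, n ≤ k ∧ ν = μ k}) :
    -- (i) asymptotic tightness
    ((∀ ε : ℝ, 0 < ε → ∃ K : Set X, IsCompact K ∧
        ∀ G : Set X, IsOpen G → K ⊆ G →
          ENNReal.ofReal (1 - ε) ≤
            Filter.liminf (fun n => (μ n : Measure X) G) Filter.atTop)
      ↔
    -- (ii) sequential tightness
      (∀ ε : ℝ, 0 < ε → ∃ K : ℝ → Set X,
        (∀ δ : ℝ, 0 < δ → IsCompact (K δ)) ∧
        (∀ δ : ℝ, 0 < δ →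
          ENNReal.ofReal (1 - ε) ≤
            Filter.liminf (fun n => (μ n : Measure X) (Metric.thickening δ (K δ)))
              Filter.atTop) ∧
        IsComplete (closure (⋃ δ ∈ Set.Ioi (0 : ℝ), K δ))))
    ∧
    -- (ii) ↔ (iii) precompactness together with tightness of ℒ
    ((∀ ε : ℝ, 0 < ε → ∃ K : ℝ → Set X,
        (∀ δ : ℝ, 0 < δ → IsCompact (K δ)) ∧
        (∀ δ : ℝ, 0 < δ →
          ENNReal.ofReal (1 - ε) ≤
            Filter.liminf (fun n => (μ n : Measure X) (Metric.thickening δ (K δ)))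
              Filter.atTop) ∧
        IsComplete (closure (⋃ δ ∈ Set.Ioi (0 : ℝ), K δ)))
      ↔
      ((∀ φ : ℕ → ℕ, StrictMono φ →
          ∃ ψ : ℕ → ℕ, StrictMono ψ ∧ ∃ ν : ProbabilityMeasure X,
            Filter.Tendsto (fun j => μ (φ (ψ j))) Filter.atTop (𝓝 ν)) ∧
        (∀ ε : ℝ, 0 < ε → ∃ K : Set X, IsCompact K ∧
          ∀ ν ∈ L, ENNReal.ofReal (1 - ε) ≤ (ν : Measure X) K))) := by
  have hL' (ν : ProbabilityMeasure X) : ν ∈ L ↔ MapClusterPt ν atTop μ :=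
    hL ▸ mem_iInter_closure_tail_iff
  have h_i_ii : AsymptoticallyTight μ ↔ SequentiallyTight μ :=
    ⟨AsymptoticallyTight.sequentiallyTight, SequentiallyTight.asymptoticallyTight⟩
  refine ⟨h_i_ii, h_i_ii.symm.trans ⟨fun hμ => ⟨?_, ?_⟩, fun ⟨hpre, htight⟩ => ?_⟩⟩
  · exact fun φ hφ => (hμ.comp_strictMono hφ).exists_subseq_tendsto
  · intro ε hε
    obtain ⟨K, hK, hνK⟩ := hμ.le_measure_of_mapClusterPt hε
    exact ⟨K, hK, fun ν hν => hνK ν ((hL' ν).1 hν)⟩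
  · refine asymptoticallyTight_of_forall_subseq hpre fun ε hε => ?_
    obtain ⟨K, hK, hνK⟩ := htight ε hε
    exact ⟨K, hK, fun ν hν => hνK ν ((hL' ν).2 hν)⟩
end
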